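/- arXiv:1210.6713 — 6 statements merged into one kernel-verified Lean document; each statement's English description precedes it below -/
import Mathlib

section
/- Let $S_n$ be the $n\times n$ matrix whose $(i,k)$ entry (for $0 \leq i \leq n-1$, $1 \leq k \leq n$) is the elementary symmetric polynomial of degree $i$ in the variables $\alpha_1,\ldots,\alpha_{k-1},\alpha_{k+1},\ldots,\alpha_n$. Then $\det S_n = \prod_{1\leq i<j\leq n}(\alpha_i - \alpha_j)$. -/
/-- The elementary symmetric polynomial of degree `i` in the variables
`α_j`, `j ∈ s`. -/
def esymmOn {R : Type*} [CommRing R] {ι : Type*} [DecidableEq ι] (s : Finset ι)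
    (α : ι → R) (i : ℕ) : R :=
  ∑ t ∈ s.powersetCard i, ∏ j ∈ t, α j

lemma prod_sub_eq_sum {R : Type*} [CommRing R] {ι : Type*} [DecidableEq ι]
    (s : Finset ι) (α : ι → R) (x : R) :
    ∏ j ∈ s, (x - α j) =
      ∑ i ∈ Finset.range (s.card + 1), (-1 : R) ^ i * (esymmOn s α i * x ^ (s.card - i)) := by
  have h := Multiset.prod_X_sub_X_eq_sum_esymm (s.val.map α)
  apply_fun Polynomial.eval x at h
  rw [Polynomial.eval_multiset_prod, Multiset.map_map] at h
  simp only [Polynomial.eval_finset_sum, Polynomial.eval_mul, Polynomial.eval_pow,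
    Polynomial.eval_neg, Polynomial.eval_one, Polynomial.eval_C, Polynomial.eval_X,
    Multiset.card_map, Function.comp, Polynomial.eval_sub] at h
  rw [Multiset.map_map] at h
  rw [show ((fun x_1 => x - x_1) ∘ α) = fun j => x - α j from rfl,
    show ((s.val.map fun j => x - α j).prod) = ∏ j ∈ s, (x - α j) from rfl] at h
  rw [h]
  refine Finset.sum_congr rfl fun i _ => ?_
  rw [Finset.esymm_map_val]
  rfl

lemma detJ {R : Type*} [CommRing R] (n : ℕ) :
    (Matrix.of fun p i : Fin n =>
      if (p : ℕ) + (i : ℕ) + 1 = n then (-1 : R) ^ (i : ℕ) else 0).det = 1 := by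
  induction n with
  | zero => exact Matrix.det_fin_zero
  | succ n ih =>
    rw [Matrix.det_succ_row_zero]
    rw [Finset.sum_eq_single (Fin.last n)]
    · have hsub : ((Matrix.of fun p i : Fin (n+1) =>
          if (p : ℕ) + (i : ℕ) + 1 = n + 1 then (-1 : R) ^ (i : ℕ) else 0).submatrix
            Fin.succ (Fin.last n).succAbove) =
          (Matrix.of fun p i : Fin n =>
            if (p : ℕ) + (i : ℕ) + 1 = n then (-1 : R) ^ (i : ℕ) else 0) := by
        ext p i
        simp only [Matrix.submatrix_apply, Fin.succAbove_last, Matrix.of_apply,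
          Fin.val_succ, Fin.coe_castSucc]
        have : (p : ℕ) + 1 + (i : ℕ) + 1 = n + 1 ↔ (p : ℕ) + (i : ℕ) + 1 = n := by omega
        rw [if_congr this rfl rfl]
      rw [hsub, ih]
      simp only [Matrix.of_apply, Fin.val_zero, Fin.val_last, zero_add, if_pos rfl, mul_one,
        if_true]
      rw [← pow_add]
      exact Even.neg_one_pow ⟨n, by ring⟩
    · intro j _ hj
      have hjn : (j : ℕ) ≠ n := by
        intro h
        exact hj (Fin.ext (by simp [h]))
      simp only [Matrix.of_apply, Fin.val_zero, zero_add]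
      rw [if_neg (by omega)]
      ring
    · simp

lemma main_eq {R : Type*} [CommRing R] (n : ℕ) (α : Fin n → R) :
    (∏ i : Fin n, ∏ j ∈ Finset.Ioi i, (α j - α i)) *
      Matrix.det (Matrix.of fun i k : Fin n =>
        esymmOn (Finset.univ.erase k) α (i : ℕ)) =
    (∏ i : Fin n, ∏ j ∈ Finset.Ioi i, (α j - α i)) *
      ∏ i : Fin n, ∏ j ∈ Finset.Ioi i, (α i - α j) := by
  set W := Matrix.vandermonde α with hWdef
  set J := (Matrix.of fun p i : Fin n =>
      if (p : ℕ) + (i : ℕ) + 1 = n then (-1 : R) ^ (i : ℕ) else 0) with hJdef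
  set S := (Matrix.of fun i k : Fin n => esymmOn (Finset.univ.erase k) α (i : ℕ)) with hSdef
  have hcard : ∀ k : Fin n, (Finset.univ.erase k).card = n - 1 := by
    intro k
    rw [Finset.card_erase_of_mem (Finset.mem_univ k), Finset.card_univ, Fintype.card_fin]
  -- step 1 : W * J
  have hWJ : W * J = Matrix.of fun m i : Fin n =>
      (-1 : R) ^ (i : ℕ) * α m ^ (n - 1 - (i : ℕ)) := by
    ext m i
    rw [Matrix.mul_apply]
    simp only [hWdef, hJdef, Matrix.of_apply, Matrix.vandermonde_apply, mul_ite, mul_zero]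
    have hi : n - 1 - (i : ℕ) < n := by omega
    rw [Finset.sum_eq_single (⟨n - 1 - (i : ℕ), hi⟩ : Fin n)]
    · rw [if_pos (by simp; omega)]
      ring
    · intro p _ hp
      rw [if_neg]
      intro h
      apply hp
      exact Fin.ext (by simp; omega)
    · simp
  -- step 2 : (W * J) * S = diagonal
  have hD : W * J * S =
      Matrix.diagonal (fun k => ∏ j ∈ Finset.univ.erase k, (α k - α j)) := by
    ext m k
    rw [hWJ, Matrix.mul_apply]
    have : ∑ i : Fin n, (Matrix.of fun m i : Fin n =>
        (-1 : R) ^ (i : ℕ) * α m ^ (n - 1 - (i : ℕ))) m i * S i k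
        = ∏ j ∈ Finset.univ.erase k, (α m - α j) := by
      rw [prod_sub_eq_sum, hcard k]
      rcases n with _ | m'
      · exact m.elim0
      · simp only [Nat.add_sub_cancel, Matrix.of_apply, hSdef]
        rw [← Fin.sum_univ_eq_sum_range
          (fun i => (-1 : R) ^ i * (esymmOn (Finset.univ.erase k) α i * α m ^ (m' - i)))
          (m' + 1)]
        refine Finset.sum_congr rfl fun i _ => ?_
        ring
    rw [this]
    rcases eq_or_ne m k with rfl | hmk
    · rw [Matrix.diagonal_apply_eq]
    · rw [Matrix.diagonal_apply_ne _ hmk]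
      exact Finset.prod_eq_zero (Finset.mem_erase.2 ⟨hmk, Finset.mem_univ m⟩) (sub_self _)
  -- take determinants
  have hdet := congrArg Matrix.det hD
  rw [Matrix.det_mul, Matrix.det_mul, detJ, mul_one, Matrix.det_vandermonde,
    Matrix.det_diagonal] at hdet
  rw [hdet]
  -- split the product over erase k
  have hsplit : ∀ k : Fin n, Finset.univ.erase k = Finset.Iio k ∪ Finset.Ioi k := by
    intro k
    ext j
    simp only [Finset.mem_erase, Finset.mem_union, Finset.mem_Iio, Finset.mem_Ioi,
      Finset.mem_univ, and_true]
    constructor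
    · intro h; exact h.lt_or_gt
    · rintro (h | h)
      · exact h.ne
      · exact h.ne'
  calc ∏ k : Fin n, ∏ j ∈ Finset.univ.erase k, (α k - α j)
      = ∏ k : Fin n, ((∏ j ∈ Finset.Iio k, (α k - α j)) * ∏ j ∈ Finset.Ioi k, (α k - α j)) := by
        refine Finset.prod_congr rfl fun k _ => ?_
        rw [hsplit k, Finset.prod_union (by simp [Finset.disjoint_left]; omega)]
    _ = (∏ k : Fin n, ∏ j ∈ Finset.Iio k, (α k - α j)) *
          ∏ k : Fin n, ∏ j ∈ Finset.Ioi k, (α k - α j) := Finset.prod_mul_distrib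
    _ = (∏ i : Fin n, ∏ j ∈ Finset.Ioi i, (α j - α i)) *
          ∏ i : Fin n, ∏ j ∈ Finset.Ioi i, (α i - α j) := by
        congr 1
        exact Finset.prod_comm' (fun k j => by
          simp only [Finset.mem_univ, true_and, and_true, Finset.mem_Iio, Finset.mem_Ioi])

lemma esymmOn_map {R S : Type*} [CommRing R] [CommRing S] {ι : Type*} [DecidableEq ι]
    (f : R →+* S) (s : Finset ι) (α : ι → R) (i : ℕ) :
    f (esymmOn s α i) = esymmOn s (fun j => f (α j)) i := by
  simp [esymmOn, map_sum, map_prod]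

/-- `det S_n = ∏_{i<j} (α_i - α_j)`, where `S_n` is the matrix whose
`(i,k)` entry is the elementary symmetric polynomial of degree `i-1` in the
variables `α_j`, `j ≠ k`. -/
theorem stmt_2 {R : Type*} [CommRing R] (n : ℕ) (α : Fin n → R) :
    Matrix.det (Matrix.of fun i k : Fin n =>
        esymmOn (Finset.univ.erase k) α (i : ℕ)) =
      ∏ i : Fin n, ∏ j ∈ Finset.Ioi i, (α i - α j) := by
  have hpoly : Matrix.det (Matrix.of fun i k : Fin n =>
      esymmOn (Finset.univ.erase k) (MvPolynomial.X : Fin n → MvPolynomial (Fin n) ℤ) (i : ℕ)) =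
      ∏ i : Fin n, ∏ j ∈ Finset.Ioi i,
        (MvPolynomial.X i - MvPolynomial.X j : MvPolynomial (Fin n) ℤ) := by
    have hU : (∏ i : Fin n, ∏ j ∈ Finset.Ioi i,
        (MvPolynomial.X j - MvPolynomial.X i : MvPolynomial (Fin n) ℤ)) ≠ 0 := by
      rw [Finset.prod_ne_zero_iff]
      intro i _
      rw [Finset.prod_ne_zero_iff]
      intro j hj
      refine sub_ne_zero.2 fun h => ?_
      exact absurd (MvPolynomial.X_injective h) (Finset.mem_Ioi.1 hj).ne'
    exact mul_left_cancel₀ hU (main_eq n _)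
  let f : MvPolynomial (Fin n) ℤ →+* R := (MvPolynomial.aeval α).toRingHom
  have h := congrArg f hpoly
  rw [RingHom.map_det, RingHom.mapMatrix_apply] at h
  have hmat : (Matrix.of fun i k : Fin n =>
      esymmOn (Finset.univ.erase k) (MvPolynomial.X : Fin n → MvPolynomial (Fin n) ℤ)
        (i : ℕ)).map f =
      Matrix.of fun i k : Fin n => esymmOn (Finset.univ.erase k) α (i : ℕ) := by
    ext i k
    simp only [Matrix.map_apply, Matrix.of_apply, esymmOn_map]
    congr 1
    ext j
    simp [f]
  rw [hmat] at h
  rw [h, map_prod]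
  refine Finset.prod_congr rfl fun i _ => ?_
  rw [map_prod]
  refine Finset.prod_congr rfl fun j _ => ?_
  simp [f]
end

section
/- Let $\alpha_1,\ldots,\alpha_{n-1}$ be pairwise distinct complex numbers, $a_1,\ldots,a_{n-1}$ nonzero complex numbers, and $b_1,\ldots,b_{n-1}$ complex numbers. If for every real $z$ the determinant of $\begin{pmatrix}\mathrm{diag}(\alpha_1,\ldots,\alpha_{n-1})+zE_{n-1} & a\\ b^\top & 0\end{pmatrix}$ is zero, then $b = 0$. -/
/-- with `n - 1` renamed to `n`: if `α₁,…,αₙ` are pairwise distinct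
complex numbers, `a₁,…,aₙ` are nonzero complex numbers, and for every real `z` the
determinant of the bordered matrix `[[diag(α) + z·E, a], [bᵀ, 0]]` vanishes, then
`b = 0`. -/
theorem stmt_6 (n : ℕ) (α a b : Fin n → ℂ) (hα : Function.Injective α)
    (ha : ∀ i, a i ≠ 0)
    (h : ∀ z : ℝ,
      Matrix.det (Matrix.fromBlocks
        (Matrix.diagonal α + (z : ℂ) • (1 : Matrix (Fin n) (Fin n) ℂ))
        (Matrix.of fun i (_ : Fin 1) => a i)
        (Matrix.of fun (_ : Fin 1) j => b j)
        0) = 0) :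
    b = 0 := by
  classical
  set Mp : Matrix (Fin n ⊕ Fin 1) (Fin n ⊕ Fin 1) (Polynomial ℂ) :=
    Matrix.fromBlocks
      (Matrix.diagonal (fun i => Polynomial.C (α i)) + (Polynomial.X : Polynomial ℂ) • 1)
      (Matrix.of fun i _ => Polynomial.C (a i))
      (Matrix.of fun _ j => Polynomial.C (b j)) 0 with hMp
  have heval : ∀ z : ℂ, Polynomial.eval z Mp.det =
      (Matrix.fromBlocks (Matrix.diagonal α + z • (1 : Matrix (Fin n) (Fin n) ℂ))
        (Matrix.of fun i (_ : Fin 1) => a i) (Matrix.of fun (_ : Fin 1) j => b j) 0).det := by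
    intro z
    have hmap : Mp.map (Polynomial.evalRingHom z) =
        Matrix.fromBlocks (Matrix.diagonal α + z • (1 : Matrix (Fin n) (Fin n) ℂ))
          (Matrix.of fun i (_ : Fin 1) => a i) (Matrix.of fun (_ : Fin 1) j => b j) 0 := by
      rw [hMp]
      ext x y
      rcases x with x | x <;> rcases y with y | y <;>
        simp only [Matrix.map_apply, Matrix.fromBlocks_apply₁₁, Matrix.fromBlocks_apply₁₂,
          Matrix.fromBlocks_apply₂₁, Matrix.fromBlocks_apply₂₂, Matrix.add_apply,
          Matrix.diagonal_apply, Matrix.smul_apply, Matrix.one_apply, Matrix.of_apply,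
          Matrix.zero_apply, smul_eq_mul, Polynomial.eval_add, Polynomial.eval_mul,
          Polynomial.eval_C, Polynomial.eval_X, Polynomial.eval_one,
          Polynomial.eval_zero, mul_ite, mul_one, mul_zero] <;>
        (try split_ifs) <;> simp
    rw [← hmap, ← RingHom.mapMatrix_apply, ← RingHom.map_det]
    rfl
  have hp0 : Mp.det = 0 := by
    apply Polynomial.eq_zero_of_infinite_isRoot
    apply Set.Infinite.mono (s := Set.range (fun z : ℝ => (z : ℂ)))
    · rintro _ ⟨z, rfl⟩
      simpa [Polynomial.IsRoot, heval] using h z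
    · exact Set.infinite_range_of_injective Complex.ofReal_injective
  funext i
  simp only [Pi.zero_apply]
  by_contra hb
  have hdet0 : (Matrix.fromBlocks
      (Matrix.diagonal α + (-α i) • (1 : Matrix (Fin n) (Fin n) ℂ))
      (Matrix.of fun i (_ : Fin 1) => a i) (Matrix.of fun (_ : Fin 1) j => b j) 0).det = 0 := by
    rw [← heval, hp0]; simp
  obtain ⟨v, hv, hmv⟩ := Matrix.exists_mulVec_eq_zero_iff.2 hdet0
  have hrow : ∀ j : Fin n, (α j - α i) * v (Sum.inl j) + a j * v (Sum.inr 0) = 0 := by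
    intro j
    have := congrFun hmv (Sum.inl j)
    simp only [Matrix.mulVec, dotProduct, Fintype.sum_sum_type,
      Matrix.fromBlocks_apply₁₁, Matrix.fromBlocks_apply₁₂, Matrix.of_apply,
      Matrix.add_apply, Matrix.diagonal_apply, Matrix.smul_apply, Matrix.one_apply,
      smul_eq_mul, Pi.zero_apply, Fin.sum_univ_one] at this
    rw [← this]
    rw [Finset.sum_eq_single j]
    · rw [if_pos rfl, if_pos rfl]
      ring
    · intro k _ hk
      simp [hk, Ne.symm hk]
    · simp
  have ht : v (Sum.inr 0) = 0 := by
    have := hrow i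
    simp only [sub_self, zero_mul, zero_add] at this
    exact (mul_eq_zero.1 this).resolve_left (ha i)
  have hx : ∀ j : Fin n, j ≠ i → v (Sum.inl j) = 0 := by
    intro j hj
    have := hrow j
    rw [ht, mul_zero, add_zero] at this
    have hαji : α j - α i ≠ 0 := sub_ne_zero.2 fun e => hj (hα e)
    exact (mul_eq_zero.1 this).resolve_left hαji
  have hlast : b i * v (Sum.inl i) = 0 := by
    have := congrFun hmv (Sum.inr 0)
    simp only [Matrix.mulVec, dotProduct, Fintype.sum_sum_type,
      Matrix.fromBlocks_apply₂₁, Matrix.fromBlocks_apply₂₂, Matrix.of_apply,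
      Matrix.zero_apply, zero_mul, Finset.sum_const_zero, add_zero,
      Pi.zero_apply] at this
    rw [← this, Finset.sum_eq_single i]
    · intro k _ hk
      rw [hx k hk, mul_zero]
    · simp
  have hvi : v (Sum.inl i) = 0 := (mul_eq_zero.1 hlast).resolve_left hb
  apply hv
  funext x
  rcases x with x | x
  · by_cases hxi : x = i
    · simpa [hxi] using hvi
    · simpa using hx x hxi
  · fin_cases x
    simpa using ht
end

section
/- With $3\leq m\leq n$, $\ell = m-1$, $p=(m-1)n$, the tensor $X(Y_1,\ldots,Y_\ell)$ has rank exactly $p$ if and only if there exist an $m\times p$ real matrix $(x_{ij})$ and an $n\times p$ matrix $A = (a_1,\ldots,a_p)$ such that $(x_{1j}Y_1 + \cdots + x_{m-1,j}Y_{m-1} - x_{mj}E_n)a_j = 0$ for each $1\leq j\leq p$ and the $p\times p$ matrix $B = (AD_1^\top, \ldots, AD_\ell^\top)^\top$ is nonsingular, where $D_k = \mathrm{diag}(x_{k1},\ldots,x_{kp})$. -/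
/-- The rank of a real 3-way tensor: the least `r` such that the tensor is the
sum of `r` simple tensors `x ⊗ y ⊗ z`. -/
noncomputable def tensorRank {ι₁ ι₂ ι₃ : Type*} (T : ι₁ → ι₂ → ι₃ → ℝ) : ℕ :=
  sInf {r : ℕ | ∃ (x : Fin r → ι₁ → ℝ) (y : Fin r → ι₂ → ℝ) (z : Fin r → ι₃ → ℝ),
    ∀ i j k, T i j k = ∑ l, x l i * y l j * z l k}

/-- The `n × p × m` tensor `X(Y)` (with `m = ℓ + 1`, `p = ℓ·n`, columns indexed by
`Fin ℓ × Fin n`): stacking its slices gives the matrix `[E_p ; (Y₁ ⋯ Y_ℓ)]`. -/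
def XT {ℓ n : ℕ} (Y : Fin ℓ → Matrix (Fin n) (Fin n) ℝ) :
    Fin n → Fin ℓ × Fin n → Fin (ℓ + 1) → ℝ :=
  fun i j k =>
    Fin.lastCases (Y j.1 i j.2) (fun k' => if j.1 = k' ∧ j.2 = i then (1 : ℝ) else 0) k


open Matrix

namespace Stmt13Aux

variable {ℓ n : ℕ}

/-- The matrix formed by stacking the first `ℓ` slices of a rank-`r` decomposition,
times the matrix of `y`-vectors, is the identity. -/
lemma slice_one {ι : Type*} [Fintype ι] (Y : Fin ℓ → Matrix (Fin n) (Fin n) ℝ)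
    (x : ι → Fin n → ℝ) (y : ι → Fin ℓ × Fin n → ℝ) (z : ι → Fin (ℓ + 1) → ℝ)
    (h : ∀ i j k, XT Y i j k = ∑ l, x l i * y l j * z l k) :
    (Matrix.of fun (q : Fin ℓ × Fin n) (l : ι) => x l q.2 * z l q.1.castSucc) *
      (Matrix.of fun (l : ι) (j : Fin ℓ × Fin n) => y l j) = 1 := by
  ext q j
  have h1 := (h q.2 j q.1.castSucc).symm
  simp only [XT, Fin.lastCases_castSucc] at h1
  rw [Matrix.mul_apply]
  simp only [Matrix.of_apply]
  rw [show (∑ l, x l q.2 * z l q.1.castSucc * y l j)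
        = ∑ l, x l q.2 * y l j * z l q.1.castSucc by
      exact Finset.sum_congr rfl fun l _ => by ring]
  rw [h1, Matrix.one_apply]
  by_cases hq : q = j
  · subst hq; simp
  · rw [if_neg hq, if_neg]
    rintro ⟨h1, h2⟩
    exact hq (by simp [Prod.ext_iff, h1, h2])

lemma card_le_of_decomp (Y : Fin ℓ → Matrix (Fin n) (Fin n) ℝ) {r : ℕ}
    (x : Fin r → Fin n → ℝ) (y : Fin r → Fin ℓ × Fin n → ℝ) (z : Fin r → Fin (ℓ + 1) → ℝ)
    (h : ∀ i j k, XT Y i j k = ∑ l, x l i * y l j * z l k) : ℓ * n ≤ r := by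
  have hBC := slice_one Y x y z h
  calc ℓ * n = Fintype.card (Fin ℓ × Fin n) := by simp
    _ = (1 : Matrix (Fin ℓ × Fin n) (Fin ℓ × Fin n) ℝ).rank := (Matrix.rank_one).symm
    _ = ((Matrix.of fun (q : Fin ℓ × Fin n) (l : Fin r) => x l q.2 * z l q.1.castSucc) *
          (Matrix.of fun (l : Fin r) (j : Fin ℓ × Fin n) => y l j)).rank := by rw [hBC]
    _ ≤ (Matrix.of fun (q : Fin ℓ × Fin n) (l : Fin r) => x l q.2 * z l q.1.castSucc).rank :=
        Matrix.rank_mul_le_left _ _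
    _ ≤ Fintype.card (Fin r) := Matrix.rank_le_card_width _
    _ = r := by simp

/-- A decomposition indexed by `Fin ℓ × Fin n` is equivalent to the pair of
matrix identities. -/
lemma decomp_iff (Y : Fin ℓ → Matrix (Fin n) (Fin n) ℝ)
    (X' : Fin ℓ × Fin n → Fin n → ℝ) (Y' : Fin ℓ × Fin n → Fin ℓ × Fin n → ℝ)
    (Z' : Fin ℓ × Fin n → Fin (ℓ + 1) → ℝ) :
    (∀ i j k, XT Y i j k = ∑ l, X' l i * Y' l j * Z' l k) ↔
      ((Matrix.of fun (q l : Fin ℓ × Fin n) => X' l q.2 * Z' l q.1.castSucc) *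
          (Matrix.of fun (l j : Fin ℓ × Fin n) => Y' l j) = 1 ∧
        (Matrix.of fun (i : Fin n) (l : Fin ℓ × Fin n) => X' l i) *
          Matrix.diagonal (fun l => Z' l (Fin.last ℓ)) *
          (Matrix.of fun (l j : Fin ℓ × Fin n) => Y' l j) =
          Matrix.of fun (i : Fin n) (q : Fin ℓ × Fin n) => Y q.1 i q.2) := by
  have hlast : ∀ (i : Fin n) (j : Fin ℓ × Fin n),
      ((Matrix.of fun (i : Fin n) (l : Fin ℓ × Fin n) => X' l i) *
          Matrix.diagonal (fun l => Z' l (Fin.last ℓ)) *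
          (Matrix.of fun (l j : Fin ℓ × Fin n) => Y' l j)) i j
        = ∑ l, X' l i * Y' l j * Z' l (Fin.last ℓ) := by
    intro i j
    rw [Matrix.mul_assoc, Matrix.mul_apply]
    refine Finset.sum_congr rfl fun l _ => ?_
    rw [Matrix.diagonal_mul, Matrix.of_apply, Matrix.of_apply]
    ring
  constructor
  · intro h
    refine ⟨slice_one Y X' Y' Z' h, ?_⟩
    ext i j
    rw [hlast i j, ← h i j (Fin.last ℓ)]
    simp [XT]
  · rintro ⟨h1, h2⟩
    intro i j k
    refine Fin.lastCases ?_ ?_ k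
    · simp only [XT, Fin.lastCases_last]
      rw [← hlast i j, h2]
      simp
    · intro k'
      have := congrFun (congrFun h1 (k', i)) j
      rw [Matrix.mul_apply] at this
      simp only [Matrix.of_apply] at this
      simp only [XT, Fin.lastCases_castSucc]
      rw [show (∑ l, X' l i * Y' l j * Z' l k'.castSucc)
            = ∑ l, X' l i * Z' l k'.castSucc * Y' l j by
          exact Finset.sum_congr rfl fun l _ => by ring, this, Matrix.one_apply]
      by_cases hq : (k', i) = j
      · rw [if_pos hq, if_pos ⟨congrArg Prod.fst hq.symm, congrArg Prod.snd hq.symm⟩]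
      · rw [if_neg hq, if_neg]
        rintro ⟨ha, hb⟩
        exact hq (by simp [Prod.ext_iff, ha, hb])

/-- The eigen-type condition on the columns is equivalent to a matrix identity. -/
lemma eigen_iff (Y : Fin ℓ → Matrix (Fin n) (Fin n) ℝ)
    (x : Fin (ℓ + 1) → Fin ℓ × Fin n → ℝ) (A : Matrix (Fin n) (Fin ℓ × Fin n) ℝ) :
    (∀ j, ((∑ k : Fin ℓ, x k.castSucc j • Y k) -
        x (Fin.last ℓ) j • (1 : Matrix (Fin n) (Fin n) ℝ)).mulVec
        (fun i => A i j) = 0) ↔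
      (Matrix.of fun (i : Fin n) (q : Fin ℓ × Fin n) => Y q.1 i q.2) *
        (Matrix.of fun (q j : Fin ℓ × Fin n) => A q.2 j * x q.1.castSucc j) =
      A * Matrix.diagonal (fun j => x (Fin.last ℓ) j) := by
  have key : ∀ (j : Fin ℓ × Fin n) (i : Fin n),
      (((∑ k : Fin ℓ, x k.castSucc j • Y k) -
        x (Fin.last ℓ) j • (1 : Matrix (Fin n) (Fin n) ℝ)).mulVec (fun i => A i j)) i
      = ((Matrix.of fun (i : Fin n) (q : Fin ℓ × Fin n) => Y q.1 i q.2) *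
          (Matrix.of fun (q j : Fin ℓ × Fin n) => A q.2 j * x q.1.castSucc j)) i j
        - (A * Matrix.diagonal (fun j => x (Fin.last ℓ) j)) i j := by
    intro j i
    rw [Matrix.mul_apply, Matrix.mul_diagonal, Matrix.mulVec, dotProduct]
    simp only [Matrix.sub_apply, Matrix.smul_apply, Matrix.one_apply, Matrix.sum_apply,
      Matrix.of_apply, smul_eq_mul, Fintype.sum_prod_type]
    rw [Finset.sum_comm]
    rw [show (∑ i' : Fin n, ((∑ k : Fin ℓ, x k.castSucc j * Y k i i')
          - x (Fin.last ℓ) j * (if i = i' then (1:ℝ) else 0)) * A i' j)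
        = (∑ i', ∑ k, Y k i i' * (A i' j * x k.castSucc j))
          - ∑ i', x (Fin.last ℓ) j * (if i = i' then (1:ℝ) else 0) * A i' j by
      rw [← Finset.sum_sub_distrib]
      refine Finset.sum_congr rfl fun i' _ => ?_
      rw [sub_mul, Finset.sum_mul]
      congr 1
      exact Finset.sum_congr rfl fun k _ => by ring]
    congr 1
    simp [mul_comm]

  constructor
  · intro h
    ext i j
    have := congrFun (h j) i
    rw [key j i] at this
    exact sub_eq_zero.mp this
  · intro h j
    funext i
    rw [Pi.zero_apply, key j i, h]
    ring

end Stmt13Aux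


/-- `rank X(Y) = p` iff there are an `m × p` matrix `x` and an
`n × p` matrix `A` with columns `a_j` such that
`(∑ₖ x_{kj} Y_k − x_{mj} Eₙ) a_j = 0` for every column index `j` and the `p × p`
matrix `B = (A D₁ ; … ; A D_ℓ)` is nonsingular, where `D_k = diag(x_{k1},…,x_{kp})`. -/
theorem stmt_13 (ℓ n : ℕ) (hl : 2 ≤ ℓ) (hn : ℓ + 1 ≤ n)
    (Y : Fin ℓ → Matrix (Fin n) (Fin n) ℝ) :
    tensorRank (XT Y) = ℓ * n ↔
      ∃ (x : Fin (ℓ + 1) → Fin ℓ × Fin n → ℝ) (A : Matrix (Fin n) (Fin ℓ × Fin n) ℝ),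
        (∀ j, ((∑ k : Fin ℓ, x k.castSucc j • Y k) -
            x (Fin.last ℓ) j • (1 : Matrix (Fin n) (Fin n) ℝ)).mulVec
            (fun i => A i j) = 0) ∧
        IsUnit (Matrix.of fun q j : Fin ℓ × Fin n =>
          A q.2 j * x q.1.castSucc j).det := by
  classical
  have hpos : 0 < ℓ * n := Nat.mul_pos (by omega) (by omega)
  set e : (Fin ℓ × Fin n) ≃ Fin (ℓ * n) := finProdFinEquiv with he
  constructor
  · intro h
    have hS : {r : ℕ | ∃ (x : Fin r → Fin n → ℝ) (y : Fin r → Fin ℓ × Fin n → ℝ)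
        (z : Fin r → Fin (ℓ + 1) → ℝ),
        ∀ i j k, XT Y i j k = ∑ l, x l i * y l j * z l k}.Nonempty := by
      by_contra hne
      rw [Set.not_nonempty_iff_eq_empty] at hne
      unfold tensorRank at h
      rw [hne, Nat.sInf_empty] at h
      omega
    have hp : ℓ * n ∈ {r : ℕ | ∃ (x : Fin r → Fin n → ℝ) (y : Fin r → Fin ℓ × Fin n → ℝ)
        (z : Fin r → Fin (ℓ + 1) → ℝ),
        ∀ i j k, XT Y i j k = ∑ l, x l i * y l j * z l k} := h ▸ Nat.sInf_mem hS
    obtain ⟨xx, yy, zz, hT⟩ := hp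
    set X' : Fin ℓ × Fin n → Fin n → ℝ := fun q i => xx (e q) i with hX'
    set Y' : Fin ℓ × Fin n → Fin ℓ × Fin n → ℝ := fun q j => yy (e q) j with hY'
    set Z' : Fin ℓ × Fin n → Fin (ℓ + 1) → ℝ := fun q k => zz (e q) k with hZ'
    have hT' : ∀ i j k, XT Y i j k = ∑ q : Fin ℓ × Fin n, X' q i * Y' q j * Z' q k := by
      intro i j k
      rw [hT i j k]
      exact Fintype.sum_equiv e.symm _ _ (fun l => by
        simp only [hX', hY', hZ', Equiv.apply_symm_apply])
    rw [Stmt13Aux.decomp_iff] at hT'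
    obtain ⟨hBC, hADC⟩ := hT'
    refine ⟨fun k q => Z' q k, Matrix.of fun i q => X' q i, ?_, ?_⟩
    · apply (Stmt13Aux.eigen_iff Y (fun k q => Z' q k) (Matrix.of fun i q => X' q i)).mpr
      have hCB : (Matrix.of fun (l j : Fin ℓ × Fin n) => Y' l j) *
          (Matrix.of fun (q l : Fin ℓ × Fin n) => X' l q.2 * Z' l q.1.castSucc) = 1 :=
        mul_eq_one_comm.mp hBC
      show (Matrix.of fun (i : Fin n) (q : Fin ℓ × Fin n) => Y q.1 i q.2) *
          (Matrix.of fun (q l : Fin ℓ × Fin n) => X' l q.2 * Z' l q.1.castSucc) =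
          (Matrix.of fun (i : Fin n) (l : Fin ℓ × Fin n) => X' l i) *
          Matrix.diagonal (fun l => Z' l (Fin.last ℓ))
      calc (Matrix.of fun (i : Fin n) (q : Fin ℓ × Fin n) => Y q.1 i q.2) *
            (Matrix.of fun (q l : Fin ℓ × Fin n) => X' l q.2 * Z' l q.1.castSucc)
          = ((Matrix.of fun (i : Fin n) (l : Fin ℓ × Fin n) => X' l i) *
              Matrix.diagonal (fun l => Z' l (Fin.last ℓ)) *
              (Matrix.of fun (l j : Fin ℓ × Fin n) => Y' l j)) *
            (Matrix.of fun (q l : Fin ℓ × Fin n) => X' l q.2 * Z' l q.1.castSucc) := by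
            rw [hADC]
        _ = (Matrix.of fun (i : Fin n) (l : Fin ℓ × Fin n) => X' l i) *
              Matrix.diagonal (fun l => Z' l (Fin.last ℓ)) *
              ((Matrix.of fun (l j : Fin ℓ × Fin n) => Y' l j) *
              (Matrix.of fun (q l : Fin ℓ × Fin n) => X' l q.2 * Z' l q.1.castSucc)) := by
            rw [Matrix.mul_assoc]
        _ = _ := by rw [hCB, Matrix.mul_one]
    · exact Matrix.isUnit_det_of_right_inverse hBC
  · rintro ⟨x, A, heig, hdet⟩
    set B : Matrix (Fin ℓ × Fin n) (Fin ℓ × Fin n) ℝ :=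
      Matrix.of fun q j => A q.2 j * x q.1.castSucc j with hB
    have hYB := (Stmt13Aux.eigen_iff Y x A).mp heig
    have hBinv : B * B⁻¹ = 1 := Matrix.mul_nonsing_inv B hdet
    have hADC : A * Matrix.diagonal (fun j => x (Fin.last ℓ) j) * B⁻¹ =
        Matrix.of fun (i : Fin n) (q : Fin ℓ × Fin n) => Y q.1 i q.2 := by
      rw [← hYB, Matrix.mul_assoc, hBinv, Matrix.mul_one]
    have hdec : ∀ i j k, XT Y i j k =
        ∑ l : Fin ℓ × Fin n, A i l * B⁻¹ l j * x k l := by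
      refine (Stmt13Aux.decomp_iff Y (fun l i => A i l) (fun l j => B⁻¹ l j)
        (fun l k => x k l)).mpr ⟨?_, ?_⟩
      · exact hBinv
      · exact hADC
    have hmem : ℓ * n ∈ {r : ℕ | ∃ (x : Fin r → Fin n → ℝ)
        (y : Fin r → Fin ℓ × Fin n → ℝ) (z : Fin r → Fin (ℓ + 1) → ℝ),
        ∀ i j k, XT Y i j k = ∑ l, x l i * y l j * z l k} := by
      refine ⟨fun l i => A i (e.symm l), fun l j => B⁻¹ (e.symm l) j,
        fun l k => x k (e.symm l), fun i j k => ?_⟩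
      rw [hdec i j k]
      exact Fintype.sum_equiv e _ _ (fun q => by simp)
    unfold tensorRank
    refine le_antisymm (Nat.sInf_le hmem) (le_csInf ⟨_, hmem⟩ ?_)
    rintro r ⟨xr, yr, zr, hr⟩
    exact Stmt13Aux.card_le_of_decomp Y xr yr zr hr
end

section
/- Let $Y = (Y_1;\ldots;Y_\ell) \in \mathbb{R}^{n\times n\times \ell}$ and suppose $Y$ is in the set $\mathfrak{M}$ (i.e., the diagonal-decomposition condition of the previous lemma holds). Let $\hat V(Y)$ be the linear span of $V(Y) = \{a \in \mathbb{R}^n : \sum_k x_k Y_k a = x_m a \text{ for some } (x_1,\ldots,x_m) \neq 0\}$. Then $\dim \hat V(Y) = n$. -/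
/-- if `Y ∈ 𝔐`, i.e. there exist an `m × p` matrix `x` and an
`n × p` matrix `A` with columns `a_j` such that
`(∑ₖ x_{kj} Y_k − x_{mj} Eₙ) a_j = 0` for all `j` and the matrix
`B = (A D₁ ; … ; A D_ℓ)` is nonsingular (`D_k = diag(x_{k1},…,x_{kp})`),
then the span `V̂(Y)` of
`V(Y) = {a : ∑ₖ xₖ Yₖ a = x_m a for some nonzero (x₁,…,x_m)}` has dimension `n`.
Here `m = ℓ + 1` and `p = ℓ·n` is indexed by `Fin ℓ × Fin n`. -/
theorem stmt_14 (ℓ n : ℕ) (hl : 2 ≤ ℓ) (hn : ℓ + 1 ≤ n)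
    (Y : Fin ℓ → Matrix (Fin n) (Fin n) ℝ)
    (hM : ∃ (x : Fin (ℓ + 1) → Fin ℓ × Fin n → ℝ)
        (A : Matrix (Fin n) (Fin ℓ × Fin n) ℝ),
        (∀ j, ((∑ k : Fin ℓ, x k.castSucc j • Y k) -
            x (Fin.last ℓ) j • (1 : Matrix (Fin n) (Fin n) ℝ)).mulVec
            (fun i => A i j) = 0) ∧
        IsUnit (Matrix.of fun q j : Fin ℓ × Fin n =>
          A q.2 j * x q.1.castSucc j).det) :
    Module.finrank ℝ (Submodule.span ℝ
      {a : Fin n → ℝ | ∃ x : Fin (ℓ + 1) → ℝ, x ≠ 0 ∧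
        (∑ k : Fin ℓ, x k.castSucc • Y k).mulVec a = x (Fin.last ℓ) • a}) = n := by
  obtain ⟨x, A, hEq, hB⟩ := hM
  set S : Set (Fin n → ℝ) :=
    {a : Fin n → ℝ | ∃ x : Fin (ℓ + 1) → ℝ, x ≠ 0 ∧
        (∑ k : Fin ℓ, x k.castSucc • Y k).mulVec a = x (Fin.last ℓ) • a} with hS
  set B : Matrix (Fin ℓ × Fin n) (Fin ℓ × Fin n) ℝ :=
    Matrix.of fun q j : Fin ℓ × Fin n => A q.2 j * x q.1.castSucc j with hBdef
  have hℓpos : 0 < ℓ := by omega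
  -- each column of A lies in S
  have hcol : ∀ j, (fun i => A i j) ∈ S := by
    intro j
    refine ⟨fun k => x k j, ?_, ?_⟩
    · intro hzero
      apply hB.ne_zero
      apply Matrix.det_eq_zero_of_column_eq_zero j
      intro q
      have : x q.1.castSucc j = 0 := congrFun hzero q.1.castSucc
      simp [hBdef, this]
    · have := hEq j
      rw [Matrix.sub_mulVec, sub_eq_zero] at this
      rw [this, Matrix.smul_mulVec, Matrix.one_mulVec]
  -- columns of A span everything, via surjectivity of B.mulVec
  have hsurj : Function.Surjective B.mulVec :=
    Matrix.mulVec_surjective_iff_isUnit.2 ((Matrix.isUnit_iff_isUnit_det B).2 hB)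
  have htop : Submodule.span ℝ S = ⊤ := by
    rw [eq_top_iff]
    rintro v -
    obtain ⟨c, hc⟩ := hsurj (fun q => v q.2)
    have hv : v = A.mulVec (fun j => x (⟨0, hℓpos⟩ : Fin ℓ).castSucc j * c j) := by
      funext i
      have := congrFun hc (⟨0, hℓpos⟩, i)
      simp only [Matrix.mulVec, dotProduct, hBdef, Matrix.of_apply] at this ⊢
      rw [← this]
      apply Finset.sum_congr rfl
      intro j _
      ring
    rw [hv]
    have : A.mulVec (fun j => x (⟨0, hℓpos⟩ : Fin ℓ).castSucc j * c j)
        = ∑ j, (x (⟨0, hℓpos⟩ : Fin ℓ).castSucc j * c j) • (fun i => A i j) := by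
      funext i
      simp [Matrix.mulVec, dotProduct, Finset.sum_apply, mul_comm]
    rw [this]
    exact Submodule.sum_mem _ fun j _ => Submodule.smul_mem _ _
      (Submodule.subset_span (hcol j))
  rw [htop, finrank_top]
  simp
end

section
/- Let $n\geq 2$, $\ell\geq 1$, $m = \ell+1$. The set $\mathfrak{B} = \{Y \in \mathbb{R}^{n\times n\times \ell} : \det M(b,Y) = 0 \text{ for some } b \neq 0, \text{ and } \det M(a,Y) \geq 0 \text{ for all } a\}$ is contained in the closure of $\mathfrak{C} = \{Y : \det M(a,Y) < 0 \text{ for some } a \in \mathbb{R}^m\}$. Consequently, $\mathbb{R}^{n\times n\times\ell}$ is the disjoint union of $\mathfrak{A} = \{Y : \det M(a,Y) > 0 \text{ for all } a \neq 0\}$ and $\overline{\mathfrak{C}}$. -/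
/-!
Write a singular matrix as `P * diagonal d * Q` with `P`, `Q` products of transvections; raising
the zero entries of `d` by suitably signed multiples of `t > 0` gives determinant `< 0`. If `b ≠ 0`
and `det M(b,Y) = 0`, some coefficient `b k` of the `Y`-part is nonzero (otherwise `M(b,Y)` is a
nonzero multiple of `1`), so such a perturbation of `M(b,Y)` is realised by moving `Y k` alone:
hence `𝔅 ⊆ closure 𝔠`. Conversely, `det M(a,Y)` is homogeneous in `a`, so `a` may be taken on
the unit sphere, and compactness of the sphere makes `{Y | ∃ a, ‖a‖ = 1 ∧ det M(a,Y) ≤ 0}`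
closed; it contains `𝔠` and misses `𝔄`.
-/

/-- For `Y = (Y₁;…;Y_ℓ)` and `a = (a₁,…,a_ℓ,a_m)`, the matrix
`M(a,Y) = ∑ₖ aₖ Yₖ − a_m Eₙ`. -/
def Mmat {n ℓ : ℕ} (a : Fin (ℓ + 1) → ℝ) (Y : Fin ℓ → Matrix (Fin n) (Fin n) ℝ) :
    Matrix (Fin n) (Fin n) ℝ :=
  (∑ k : Fin ℓ, a k.castSucc • Y k) - a (Fin.last ℓ) • (1 : Matrix (Fin n) (Fin n) ℝ)

/-- `𝔄`: the set of `Y` with `det M(a,Y) > 0` for all `a ≠ 0`. -/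
def setA (n ℓ : ℕ) : Set (Fin ℓ → Matrix (Fin n) (Fin n) ℝ) :=
  {Y | ∀ a : Fin (ℓ + 1) → ℝ, a ≠ 0 → 0 < (Mmat a Y).det}

/-- `𝔠`: the set of `Y` with `det M(a,Y) < 0` for some `a`. -/
def setC (n ℓ : ℕ) : Set (Fin ℓ → Matrix (Fin n) (Fin n) ℝ) :=
  {Y | ∃ a : Fin (ℓ + 1) → ℝ, (Mmat a Y).det < 0}

/-- `𝔅`: the set of `Y` with `det M(b,Y) = 0` for some `b ≠ 0` and
`det M(a,Y) ≥ 0` for all `a`. -/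
def setB (n ℓ : ℕ) : Set (Fin ℓ → Matrix (Fin n) (Fin n) ℝ) :=
  {Y | (∃ b : Fin (ℓ + 1) → ℝ, b ≠ 0 ∧ (Mmat b Y).det = 0) ∧
    ∀ a : Fin (ℓ + 1) → ℝ, 0 ≤ (Mmat a Y).det}

open Finset

theorem Finset.exists_prod_add_mul_neg_of_eq_zero {ι : Type*} [Fintype ι] [DecidableEq ι]
    (d : ι → ℝ) {i₀ : ι} (hi₀ : d i₀ = 0) :
    ∃ e : ι → ℝ, ∀ t : ℝ, 0 < t → ∏ i, (d i + t * e i) < 0 := by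
  set c := ∏ i ∈ univ.filter (d · ≠ 0), d i
  have hc : c ≠ 0 := prod_ne_zero_iff.2 fun i hi => (mem_filter.1 hi).2
  -- the factor `-c` at `i₀` makes the product `-c² t ^ k`, with `k` the number of zeros of `d`
  refine ⟨fun i => if i = i₀ then -c else if d i = 0 then 1 else 0, fun t ht => ?_⟩
  have hsplit : ∀ i, d i + t * (if i = i₀ then -c else if d i = 0 then 1 else 0) =
      (if i = i₀ then -c else 1) * (if d i = 0 then t else d i) := by
    intro i
    by_cases h : i = i₀ <;> by_cases hd : d i = 0 <;> simp_all [mul_comm]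
  rw [prod_congr rfl fun i _ => hsplit i, prod_mul_distrib, prod_ite_eq' univ i₀, prod_ite,
    prod_const]
  simp only [mem_univ, if_true]
  linear_combination mul_pos (mul_self_pos.2 hc) (pow_pos ht #(univ.filter (d · = 0)))

theorem Matrix.exists_det_add_smul_neg_of_det_eq_zero {ι : Type*} [Fintype ι] [DecidableEq ι]
    (A : Matrix ι ι ℝ) (hA : A.det = 0) :
    ∃ N : Matrix ι ι ℝ, ∀ t : ℝ, 0 < t → (A + t • N).det < 0 := by
  obtain ⟨L, L', D, rfl⟩ := Pivot.exists_list_transvec_mul_diagonal_mul_list_transvec A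
  set P := (L.map TransvectionStruct.toMatrix).prod
  set Q := (L'.map TransvectionStruct.toMatrix).prod
  obtain ⟨i₀, -, hi₀⟩ : ∃ i ∈ univ, D i = 0 := prod_eq_zero_iff.1 (by simpa [P, Q] using hA)
  obtain ⟨e, he⟩ := exists_prod_add_mul_neg_of_eq_zero D hi₀
  refine ⟨P * diagonal e * Q, fun t ht => ?_⟩
  have hperturb : P * diagonal D * Q + t • (P * diagonal e * Q) = P * diagonal (D + t • e) * Q := by
    rw [← Matrix.smul_mul, ← Matrix.mul_smul, ← diagonal_smul, ← Matrix.add_mul, ← Matrix.mul_add,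
      diagonal_add]
    rfl
  simpa [hperturb, P, Q] using he t ht

section Mmat

variable {n ℓ : ℕ}

lemma Mmat_smul (c : ℝ) (a : Fin (ℓ + 1) → ℝ) (Y : Fin ℓ → Matrix (Fin n) (Fin n) ℝ) :
    Mmat (c • a) Y = c • Mmat a Y := by
  simp [Mmat, smul_sub, smul_sum, smul_smul]

lemma Mmat_add_single (b : Fin (ℓ + 1) → ℝ) (Y : Fin ℓ → Matrix (Fin n) (Fin n) ℝ)
    (k : Fin ℓ) (N : Matrix (Fin n) (Fin n) ℝ) :
    Mmat b (Y + Pi.single k N) = Mmat b Y + b k.castSucc • N := by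
  simp [Mmat, smul_add, sum_add_distrib, Pi.single_apply, sub_add_eq_add_sub]

lemma continuous_det_Mmat :
    Continuous fun p : (Fin (ℓ + 1) → ℝ) × (Fin ℓ → Matrix (Fin n) (Fin n) ℝ) =>
      (Mmat p.1 p.2).det := by
  unfold Mmat
  fun_prop

lemma exists_castSucc_ne_zero_of_det_Mmat_eq_zero {b : Fin (ℓ + 1) → ℝ}
    {Y : Fin ℓ → Matrix (Fin n) (Fin n) ℝ} (hb : b ≠ 0) (hdet : (Mmat b Y).det = 0) :
    ∃ k : Fin ℓ, b k.castSucc ≠ 0 := by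
  by_contra! h
  have hM : Mmat b Y = (-b (Fin.last ℓ)) • 1 := by simp [Mmat, h]
  rw [hM, Matrix.det_smul, Matrix.det_one, mul_one] at hdet
  refine hb (funext fun i => Fin.lastCases ?_ h i)
  simpa using eq_zero_of_pow_eq_zero hdet

end Mmat

section Sets

variable {n ℓ : ℕ}

theorem setB_subset_closure_setC : setB n ℓ ⊆ closure (setC n ℓ) := by
  rintro Y ⟨⟨b, hb, hdet⟩, -⟩
  obtain ⟨k, hk⟩ := exists_castSucc_ne_zero_of_det_Mmat_eq_zero hb hdet
  obtain ⟨N, hN⟩ := Matrix.exists_det_add_smul_neg_of_det_eq_zero _ hdet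
  set F : ℝ → Fin ℓ → Matrix (Fin n) (Fin n) ℝ :=
    fun t => Y + Pi.single k ((t / b k.castSucc) • N)
  have hF : ∀ t, Mmat b (F t) = Mmat b Y + t • N := fun t => by
    rw [Mmat_add_single, smul_smul, mul_div_cancel₀ _ hk]
  have hFY : Filter.Tendsto F (nhdsWithin 0 (Set.Ioi 0)) (nhds Y) := by
    have hcont : Continuous F := continuous_const.add
      ((continuous_single k).comp ((continuous_id.div_const _).smul continuous_const))
    simpa [F] using (hcont.tendsto 0).mono_left nhdsWithin_le_nhds
  exact mem_closure_of_tendsto hFY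
    (eventually_nhdsWithin_of_forall fun t ht => ⟨b, by rw [hF]; exact hN t ht⟩)

theorem closure_setC_subset :
    closure (setC n ℓ) ⊆ {Y | ∃ a ∈ Metric.sphere 0 1, (Mmat a Y).det ≤ 0} := by
  refine closure_minimal ?_ ?_
  · rintro Y ⟨a, ha⟩
    have ha0 : a ≠ 0 := by
      rintro rfl
      -- `det 0 = 1` for `n = 0`
      cases isEmpty_or_nonempty (Fin n) <;> norm_num [Mmat] at ha
    have hpos : 0 < ‖a‖ := norm_pos_iff.2 ha0
    refine ⟨‖a‖⁻¹ • a, by simp [norm_smul, hpos.ne'], ?_⟩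
    rw [Mmat_smul, Matrix.det_smul]
    exact mul_nonpos_of_nonneg_of_nonpos (by positivity) ha.le
  · have hW : {Y | ∃ a ∈ Metric.sphere 0 1, (Mmat a Y).det ≤ 0} = Prod.snd ''
        {p : Metric.sphere (0 : Fin (ℓ + 1) → ℝ) 1 × (Fin ℓ → Matrix (Fin n) (Fin n) ℝ) |
          (Mmat p.1.1 p.2).det ≤ 0} := by
      ext; simp
    rw [hW]
    exact isClosedMap_snd_of_compactSpace _ (isClosed_le
      (continuous_det_Mmat.comp (continuous_subtype_val.prodMap continuous_id)) continuous_const)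

theorem disjoint_setA_closure_setC : Disjoint (setA n ℓ) (closure (setC n ℓ)) :=
  Set.disjoint_left.2 fun _ hA hC =>
    let ⟨a, ha, hle⟩ := closure_setC_subset hC
    (hA a (ne_zero_of_mem_unit_sphere ⟨a, ha⟩)).not_ge hle

theorem setA_union_closure_setC : setA n ℓ ∪ closure (setC n ℓ) = Set.univ := by
  refine Set.eq_univ_of_forall fun Y => or_iff_not_imp_left.2 fun hA => ?_
  obtain ⟨a, ha, hle⟩ : ∃ a, a ≠ 0 ∧ (Mmat a Y).det ≤ 0 := by simpa [setA] using hA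
  by_cases hC : Y ∈ setC n ℓ
  · exact subset_closure hC
  · have hnonneg : ∀ a, 0 ≤ (Mmat a Y).det := by simpa [setC] using hC
    exact setB_subset_closure_setC ⟨⟨a, ha, le_antisymm hle (hnonneg a)⟩, hnonneg⟩

end Sets

theorem stmt_16_general (n ℓ : ℕ) :
    setB n ℓ ⊆ closure (setC n ℓ) ∧
      setA n ℓ ∪ closure (setC n ℓ) = Set.univ ∧
      Disjoint (setA n ℓ) (closure (setC n ℓ)) :=
  ⟨setB_subset_closure_setC, setA_union_closure_setC, disjoint_setA_closure_setC⟩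

/-- `𝔅 ⊆ closure 𝔠`, and consequently the space of
`n × n × ℓ` tensors is the disjoint union of `𝔄` and `closure 𝔠`. -/
theorem stmt_16 (n ℓ : ℕ) (hn : 2 ≤ n) (hl : 1 ≤ ℓ) :
    setB n ℓ ⊆ closure (setC n ℓ) ∧
      setA n ℓ ∪ closure (setC n ℓ) = Set.univ ∧
      Disjoint (setA n ℓ) (closure (setC n ℓ)) :=
  stmt_16_general n ℓ
end

section
/- Let $m \le \rho(n-1)$ where $\rho$ is the Hurwitz-Radon function, and suppose $(A_1;\ldots;A_{m-1};E_{n-1})$ is an $(n-1)\times(n-1)\times m$ absolutely nonsingular tensor. Set $B_k = \mathrm{diag}(a_k, A_k)$ for fixed reals $a_k$, $1\le k\le m-1$, and $B = (B_1;\ldots;B_{m-1}) \in \mathbb{R}^{n\times n\times(m-1)}$. Then for any $x \in \mathbb{R}^{m-1}$ and $z \in \mathbb{R}$, $\det(\sum_{k=1}^{m-1} x_k B_k - zE_n) = 0$ implies $z = \sum_{k=1}^{m-1} a_k x_k$; consequently $V(B) = \{t(1,0,\ldots,0)^\top : t \in \mathbb{R}\}$ is one-dimensional. -/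
/-- The Hurwitz–Radon function: `ρ(n) = 2^b + 8c` where `n = (2a+1)·2^{b+4c}`
with `0 ≤ b < 4`. -/
def hurwitzRadon (n : ℕ) : ℕ :=
  2 ^ (n.factorization 2 % 4) + 8 * (n.factorization 2 / 4)

/-- with `m = ℓ + 1` and `n = n' + 1`: suppose `m ≤ ρ(n-1)` and
`(A₁;…;A_ℓ;E_{n-1})` is an `(n-1) × (n-1) × m` absolutely nonsingular tensor.
Let `B_k = diag(a_k, A_k)`.  Then for all `x ∈ ℝ^{m-1}` and `z ∈ ℝ`,
`det(∑ₖ x_k B_k − z Eₙ) = 0` implies `z = ∑ₖ a_k x_k`; consequently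
`V(B) = {t·(1,0,…,0)ᵀ : t ∈ ℝ}`. -/
theorem stmt_18 (ℓ n' : ℕ) (hm : 2 ≤ ℓ) (hn : ℓ + 1 ≤ n' + 1)
    (hρ : ℓ + 1 ≤ hurwitzRadon n')
    (A : Fin ℓ → Matrix (Fin n') (Fin n') ℝ)
    (hA : ∀ x : Fin (ℓ + 1) → ℝ,
      ((∑ k : Fin ℓ, x k.castSucc • A k) +
        x (Fin.last ℓ) • (1 : Matrix (Fin n') (Fin n') ℝ)).det = 0 → x = 0)
    (a : Fin ℓ → ℝ)
    (B : Fin ℓ → Matrix (Fin (n' + 1)) (Fin (n' + 1)) ℝ)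
    (hB : ∀ k, B k = Matrix.of fun i j : Fin (n' + 1) =>
      Fin.cases (Fin.cases (a k) (fun _ => 0) j)
        (fun i' => Fin.cases 0 (fun j' => A k i' j') j) i) :
    (∀ (x : Fin ℓ → ℝ) (z : ℝ),
        ((∑ k, x k • B k) - z • (1 : Matrix (Fin (n' + 1)) (Fin (n' + 1)) ℝ)).det = 0 →
        z = ∑ k, a k * x k) ∧
      {y : Fin (n' + 1) → ℝ | ∃ (x : Fin ℓ → ℝ) (z : ℝ), (x ≠ 0 ∨ z ≠ 0) ∧
          ((∑ k, x k • B k) - z • (1 : Matrix (Fin (n' + 1)) (Fin (n' + 1)) ℝ)).mulVec y = 0} =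
        {y | ∃ t : ℝ, y = t • Pi.single (0 : Fin (n' + 1)) (1 : ℝ)} := by
  classical
  -- entry computations for M x z := ∑ x k • B k - z • 1
  have hM00 : ∀ (x : Fin ℓ → ℝ) (z : ℝ),
      ((∑ k, x k • B k) - z • (1 : Matrix (Fin (n' + 1)) (Fin (n' + 1)) ℝ)) 0 0
        = ∑ k, a k * x k - z := by
    intro x z
    simp [Matrix.sub_apply, Matrix.sum_apply, hB, Matrix.one_apply, mul_comm]
  have hMs0 : ∀ (x : Fin ℓ → ℝ) (z : ℝ) (i : Fin n'),
      ((∑ k, x k • B k) - z • (1 : Matrix (Fin (n' + 1)) (Fin (n' + 1)) ℝ)) i.succ 0 = 0 := by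
    intro x z i
    simp [Matrix.sub_apply, Matrix.sum_apply, hB, Matrix.one_apply,
      (Fin.succ_ne_zero i)]
  have hMss : ∀ (x : Fin ℓ → ℝ) (z : ℝ) (i j : Fin n'),
      ((∑ k, x k • B k) - z • (1 : Matrix (Fin (n' + 1)) (Fin (n' + 1)) ℝ)) i.succ j.succ
        = ((∑ k, x k • A k) - z • (1 : Matrix (Fin n') (Fin n') ℝ)) i j := by
    intro x z i j
    simp [Matrix.sub_apply, Matrix.sum_apply, hB, Matrix.one_apply, Fin.succ_inj]
  -- N is nonsingular whenever (x, z) ≠ 0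
  have hNdet : ∀ (x : Fin ℓ → ℝ) (z : ℝ), (x ≠ 0 ∨ z ≠ 0) →
      ((∑ k, x k • A k) - z • (1 : Matrix (Fin n') (Fin n') ℝ)).det ≠ 0 := by
    intro x z hxz hdet0
    have hw : (Fin.snoc x (-z) : Fin (ℓ + 1) → ℝ) = 0 := by
      apply hA
      have : (∑ k : Fin ℓ, (Fin.snoc x (-z) : Fin (ℓ + 1) → ℝ) k.castSucc • A k) +
          (Fin.snoc x (-z) : Fin (ℓ + 1) → ℝ) (Fin.last ℓ) • (1 : Matrix (Fin n') (Fin n') ℝ)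
          = (∑ k, x k • A k) - z • (1 : Matrix (Fin n') (Fin n') ℝ) := by
        simp [Fin.snoc_castSucc, Fin.snoc_last, sub_eq_add_neg]
      rw [this]; exact hdet0
    rcases hxz with hx | hz
    · apply hx
      funext k
      have := congrFun hw k.castSucc
      simpa [Fin.snoc_castSucc] using this
    · apply hz
      have := congrFun hw (Fin.last ℓ)
      simp [Fin.snoc_last] at this
      linarith
  -- determinant factorization
  have hdet : ∀ (x : Fin ℓ → ℝ) (z : ℝ),
      ((∑ k, x k • B k) - z • (1 : Matrix (Fin (n' + 1)) (Fin (n' + 1)) ℝ)).det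
        = (∑ k, a k * x k - z) *
          ((∑ k, x k • A k) - z • (1 : Matrix (Fin n') (Fin n') ℝ)).det := by
    intro x z
    rw [Matrix.det_succ_column_zero]
    rw [Fin.sum_univ_succ]
    have hsub : (((∑ k, x k • B k) - z • (1 : Matrix (Fin (n' + 1)) (Fin (n' + 1)) ℝ)).submatrix
        ((0 : Fin (n' + 1)).succAbove) Fin.succ)
        = (∑ k, x k • A k) - z • (1 : Matrix (Fin n') (Fin n') ℝ) := by
      ext i j
      simp only [Matrix.submatrix_apply, Fin.succAbove_zero]
      exact hMss x z i j
    rw [hsub, hM00]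
    have : ∀ i : Fin n',
        (-1 : ℝ) ^ ((i.succ : Fin (n' + 1)) : ℕ) *
          ((∑ k, x k • B k) - z • (1 : Matrix (Fin (n' + 1)) (Fin (n' + 1)) ℝ)) i.succ 0 *
          (((∑ k, x k • B k) - z • (1 : Matrix (Fin (n' + 1)) (Fin (n' + 1)) ℝ)).submatrix
            i.succ.succAbove Fin.succ).det = 0 := by
      intro i
      rw [hMs0]
      ring
    rw [Finset.sum_eq_zero (fun i _ => this i)]
    norm_num
  constructor
  · -- first part
    intro x z h
    by_cases hx0 : x = 0 ∧ z = 0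
    · rw [hx0.1, hx0.2]; simp
    · have hxz : x ≠ 0 ∨ z ≠ 0 := by tauto
      rw [hdet] at h
      rcases mul_eq_zero.1 h with h1 | h2
      · linarith
      · exact absurd h2 (hNdet x z hxz)
  · -- set equality
    ext y
    simp only [Set.mem_setOf_eq]
    constructor
    · rintro ⟨x, z, hxz, hy⟩
      -- tail of y vanishes
      have htail : ∀ j : Fin n', y j.succ = 0 := by
        have hN : ((∑ k, x k • A k) - z • (1 : Matrix (Fin n') (Fin n') ℝ)).det ≠ 0 :=
          hNdet x z hxz
        have hmv : ((∑ k, x k • A k) - z • (1 : Matrix (Fin n') (Fin n') ℝ)).mulVec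
            (fun j => y j.succ) = 0 := by
          funext i
          have := congrFun hy i.succ
          simp only [Matrix.mulVec, dotProduct, Pi.zero_apply] at this ⊢
          rw [Fin.sum_univ_succ, hMs0, zero_mul, zero_add] at this
          rw [← this]
          exact Finset.sum_congr rfl (fun j _ => by rw [hMss])
        have hinv : IsUnit ((∑ k, x k • A k) - z • (1 : Matrix (Fin n') (Fin n') ℝ)).det :=
          isUnit_iff_ne_zero.2 hN
        have := Matrix.eq_zero_of_mulVec_eq_zero hN hmv
        intro j
        exact congrFun this j
      refine ⟨y 0, ?_⟩
      funext i
      refine Fin.cases ?_ ?_ i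
      · simp
      · intro i'
        simp [htail i', Pi.single_eq_of_ne (Fin.succ_ne_zero i')]
    · rintro ⟨t, rfl⟩
      haveI : NeZero ℓ := ⟨by omega⟩
      refine ⟨Pi.single 0 1, a 0, Or.inl ?_, ?_⟩
      · intro h0
        have := congrFun h0 0
        simp at this
      · funext i
        simp only [Matrix.mulVec, dotProduct, Pi.zero_apply]
        have hyval : ∀ j : Fin (n' + 1),
            (t • (Pi.single (0 : Fin (n' + 1)) (1 : ℝ) : Fin (n' + 1) → ℝ)) j = if j = 0 then t else 0 := by
          intro j
          by_cases hj : j = 0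
          · simp [hj]
          · simp [Pi.single_eq_of_ne hj, hj]
        have : ∀ j : Fin (n' + 1),
            ((∑ k, (Pi.single (0 : Fin ℓ) (1:ℝ) : Fin ℓ → ℝ) k • B k) -
              a 0 • (1 : Matrix (Fin (n' + 1)) (Fin (n' + 1)) ℝ)) i j *
              (t • (Pi.single (0 : Fin (n' + 1)) (1 : ℝ) : Fin (n' + 1) → ℝ)) j
            = if j = 0 then
                ((∑ k, (Pi.single (0 : Fin ℓ) (1:ℝ) : Fin ℓ → ℝ) k • B k) -
                  a 0 • (1 : Matrix (Fin (n' + 1)) (Fin (n' + 1)) ℝ)) i 0 * t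
              else 0 := by
          intro j
          rw [hyval j]
          by_cases hj : j = 0
          · subst hj; simp
          · simp [hj]
        rw [Finset.sum_congr rfl (fun j _ => this j), Finset.sum_ite_eq'
          Finset.univ (0 : Fin (n' + 1))]
        simp only [Finset.mem_univ, if_true]
        refine Fin.cases ?_ ?_ i
        · rw [hM00]
          have : (∑ k, a k * (Pi.single (0 : Fin ℓ) (1:ℝ) : Fin ℓ → ℝ) k) = a 0 := by
            rw [Finset.sum_eq_single 0]
            · simp
            · intro b _ hb; simp [Pi.single_eq_of_ne hb]
            · simp
          rw [this]; ring
        · intro i'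
          rw [hMs0]; ring
end
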